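/- For T admitting an A-adjoint and α ∈ [0,1], ‖T‖_{A,α}² ≤ (α/2) w_A(T²) + ‖(α/4)(T^{♯A}T + TT^{♯A}) + (1−α)T^{♯A}T‖_A. In particular, w_A(T)² ≤ (1/2)w_A(T²) + (1/4)‖T^{♯A}T + TT^{♯A}‖_A. -/

import Mathlib

open scoped ComplexOrder
open ContinuousLinearMap Filter Topology

variable {H : Type*} [NormedAddCommGroup H] [InnerProductSpace ℂ H] [CompleteSpace H]

/-- The A-semi-inner product `⟨x, y⟩_A = ⟨A x, y⟩` (Mathlib convention: conjugate
linear in the first variable). -/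
noncomputable def aInner (A : H →L[ℂ] H) (x y : H) : ℂ := inner ℂ (A x) y

/-- The A-seminorm `‖x‖_A = sqrt ⟨x, x⟩_A`. -/
noncomputable def aNorm (A : H →L[ℂ] H) (x : H) : ℝ := Real.sqrt (aInner A x x).re

/-- `T` is A-bounded. -/
def ABounded (A T : H →L[ℂ] H) : Prop := ∃ c > 0, ∀ x, aNorm A (T x) ≤ c * aNorm A x

/-- The A-operator seminorm. -/
noncomputable def opNormA (A T : H →L[ℂ] H) : ℝ :=
  sSup {r | ∃ x ∈ closure (Set.range A), aNorm A x = 1 ∧ r = aNorm A (T x)}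

/-- The A-numerical radius. -/
noncomputable def wA (A T : H →L[ℂ] H) : ℝ :=
  sSup {r | ∃ x, aNorm A x = 1 ∧ r = ‖aInner A (T x) x‖}

/-- The A-Crawford number. -/
noncomputable def cA (A T : H →L[ℂ] H) : ℝ :=
  sInf {r | ∃ x, aNorm A x = 1 ∧ r = ‖aInner A (T x) x‖}

/-- The `A_α`-seminorm `‖T‖_{A,α}`. -/
noncomputable def alphaNorm (A T : H →L[ℂ] H) (α : ℝ) : ℝ :=
  sSup {r | ∃ x, aNorm A x = 1 ∧
    r = Real.sqrt (α * ‖aInner A (T x) x‖ ^ 2 + (1 - α) * aNorm A (T x) ^ 2)}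

/-- `S` is the A-adjoint `T^{♯_A}` of `T`: the solution of `A X = T* A` whose
range lies in the closure of the range of `A`. -/
def IsAAdjoint (A T S : H →L[ℂ] H) : Prop :=
  A ∘L S = (ContinuousLinearMap.adjoint T) ∘L A ∧ ∀ x, S x ∈ closure (Set.range A)

/-!
For `‖x‖_A = 1` the `A`-adjoint relation gives `⟨Tx, x⟩_A = ⟨x, T^♯x⟩_A` and
`⟨Tx, T^♯x⟩_A = ⟨T²x, x⟩_A`, so Buzano's inequality with `e = x` and AM-GM yield
`|⟨Tx, x⟩_A|² ≤ ½ |⟨T²x, x⟩_A| + ¼ (‖Tx‖_A² + ‖T^♯x‖_A²)`, where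
`‖Tx‖_A² + ‖T^♯x‖_A² = Re ⟨(T^♯T + TT^♯)x, x⟩_A`. Weighting by `α` and adding
`(1 - α) ‖Tx‖_A² = (1 - α) Re ⟨T^♯Tx, x⟩_A` bounds the integrand of `‖T‖_{A,α}²` by
`(α/2) w_A(T²) + ‖Rx‖_A`, `R` the operator on the right.

Two points make the suprema behave. Operators `K` with `AK = K*A` are `A`-bounded: iterating
`‖Kx‖_A² ≤ ‖x‖_A ‖K²x‖_A` along `K^(2^n)` gives `‖Kx‖_A ≤ ‖K‖ ‖x‖_A`. And the supremum defining
`‖R‖_A` only runs over `closure (range A)`; the orthogonal projection onto it changes `x` by an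
element of `(range A)ᗮ = ker A`, which does not change `‖x‖_A` or `‖Rx‖_A`.
-/

open scoped InnerProductSpace

theorem le_of_forall_pow_le_mul_pow {a b C : ℝ} (hb : 0 ≤ b) {N : ℕ → ℕ}
    (hN : Tendsto N atTop atTop) (h : ∀ n, a ^ N n ≤ C * b ^ N n) : a ≤ b := by
  by_contra! hab
  have ha : 0 < a := hb.trans_lt hab
  have hlim : Tendsto (fun n ↦ C * (b / a) ^ N n) atTop (𝓝 0) := by
    simpa using ((tendsto_pow_atTop_nhds_zero_of_lt_one (div_nonneg hb ha.le)
      ((div_lt_one ha).2 hab)).comp hN).const_mul C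
  obtain ⟨n, hn⟩ := (hlim.eventually (gt_mem_nhds one_pos)).exists
  rw [div_pow, mul_div_assoc', div_lt_one (by positivity)] at hn
  linarith [h n]

theorem pow_two_pow_le_of_sq_le {u : ℕ → ℝ} (hu : 0 ≤ u 0) (h : ∀ n, u n ^ 2 ≤ u (n + 1))
    (n : ℕ) : u 0 ^ 2 ^ n ≤ u n := by
  induction n with
  | zero => simp
  | succ n ih => calc
      u 0 ^ 2 ^ (n + 1) = (u 0 ^ 2 ^ n) ^ 2 := by rw [pow_succ, pow_mul]
      _ ≤ u n ^ 2 := pow_le_pow_left₀ (by positivity) ih 2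
      _ ≤ u (n + 1) := h n

theorem sq_sSup_le {s : Set ℝ} {c : ℝ} (hs : ∀ r ∈ s, 0 ≤ r ∧ r ^ 2 ≤ c) (hc : 0 ≤ c) :
    sSup s ^ 2 ≤ c := by
  have hle : sSup s ≤ √c := Real.sSup_le
    (fun r hr ↦ (le_abs_self r).trans (Real.abs_le_sqrt (hs r hr).2)) (Real.sqrt_nonneg c)
  calc sSup s ^ 2 ≤ √c ^ 2 := pow_le_pow_left₀ (Real.sSup_nonneg fun r hr ↦ (hs r hr).1) hle 2
    _ = c := Real.sq_sqrt hc

theorem SemiconjBy.star_of_isSelfAdjoint {R : Type*} [Monoid R] [StarMul R] {a x y : R}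
    (ha : IsSelfAdjoint a) (h : SemiconjBy a x (star y)) : SemiconjBy a y (star x) := by
  simpa [ha.star_eq] using h.star_star_star

theorem SemiconjBy.mul_star_of_isSelfAdjoint {R : Type*} [Monoid R] [StarMul R] {a x y : R}
    (ha : IsSelfAdjoint a) (h : SemiconjBy a x (star y)) :
    SemiconjBy a (x * y) (star (x * y)) := by
  rw [star_mul]
  exact h.mul_right (h.star_of_isSelfAdjoint ha)

/-- Buzano's inequality. -/
theorem norm_inner_mul_inner_le_of_norm_eq_one {𝕜 E : Type*} [RCLike 𝕜] [NormedAddCommGroup E]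
    [InnerProductSpace 𝕜 E] (a b : E) {e : E} (he : ‖e‖ = 1) :
    ‖⟪a, e⟫_𝕜 * ⟪e, b⟫_𝕜‖ ≤ (‖⟪a, b⟫_𝕜‖ + ‖a‖ * ‖b‖) / 2 := by
  -- the reflection in the line through `e` is an isometry
  have hrefl : ⟪a, (𝕜 ∙ e).reflection b⟫_𝕜 = 2 * (⟪a, e⟫_𝕜 * ⟪e, b⟫_𝕜) - ⟪a, b⟫_𝕜 := by
    rw [Submodule.reflection_apply, Submodule.starProjection_unit_singleton 𝕜 he,
      inner_sub_right, two_smul, inner_add_right, inner_smul_right]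
    ring
  have hcs := norm_inner_le_norm (𝕜 := 𝕜) a ((𝕜 ∙ e).reflection b)
  rw [hrefl, LinearIsometryEquiv.norm_map] at hcs
  have htri := norm_le_norm_sub_add (2 * (⟪a, e⟫_𝕜 * ⟪e, b⟫_𝕜)) ⟪a, b⟫_𝕜
  rw [norm_mul, RCLike.norm_two] at htri
  linarith

section SemiInnerProduct

variable {E : Type*} [NormedAddCommGroup E] [InnerProductSpace ℂ E] {A : E →L[ℂ] E}

theorem ContinuousLinearMap.IsPositive.exists_aInner_eq [CompleteSpace E] (hA : A.IsPositive) :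
    ∃ B : E →L[ℂ] E, ∀ x y, aInner A x y = ⟪B x, B y⟫_ℂ := by
  obtain ⟨B, rfl⟩ := CStarAlgebra.nonneg_iff_eq_star_mul_self.1 ((nonneg_iff_isPositive A).2 hA)
  exact ⟨B, fun x y ↦ by
    rw [aInner, star_eq_adjoint, mul_apply_eq_comp, adjoint_inner_left]⟩

theorem aNorm_eq_norm {B : E →L[ℂ] E} (hB : ∀ x y, aInner A x y = ⟪B x, B y⟫_ℂ) (x : E) :
    aNorm A x = ‖B x‖ := by
  rw [aNorm, hB, ← RCLike.re_to_complex, inner_self_eq_norm_sq, Real.sqrt_sq (norm_nonneg _)]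

theorem aNorm_nonneg (A : E →L[ℂ] E) (x : E) : 0 ≤ aNorm A x := Real.sqrt_nonneg _

theorem aInner_add_left (A : E →L[ℂ] E) (x y z : E) :
    aInner A (x + y) z = aInner A x z + aInner A y z := by
  rw [aInner, map_add, inner_add_left, aInner, aInner]

theorem re_aInner_smul_left (A : E →L[ℂ] E) (r : ℝ) (x y : E) :
    (aInner A (r • x) y).re = r * (aInner A x y).re := by
  rw [aInner, map_smul_of_tower, inner_smul_left_eq_smul, Complex.smul_re, smul_eq_mul, aInner]

theorem wA_nonneg (A K : E →L[ℂ] E) : 0 ≤ wA A K :=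
  Real.sSup_nonneg (by rintro _ ⟨x, -, rfl⟩; exact norm_nonneg _)

theorem opNormA_nonneg (A K : E →L[ℂ] E) : 0 ≤ opNormA A K :=
  Real.sSup_nonneg (by rintro _ ⟨x, -, -, rfl⟩; exact aNorm_nonneg _ _)

variable [CompleteSpace E]

theorem aNorm_sq_eq_re_aInner (hA : A.IsPositive) (x : E) :
    aNorm A x ^ 2 = (aInner A x x).re := by
  obtain ⟨B, hB⟩ := hA.exists_aInner_eq
  rw [aNorm_eq_norm hB, hB, ← RCLike.re_to_complex, inner_self_eq_norm_sq]

theorem norm_aInner_le_aNorm_mul_aNorm (hA : A.IsPositive) (x y : E) :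
    ‖aInner A x y‖ ≤ aNorm A x * aNorm A y := by
  obtain ⟨B, hB⟩ := hA.exists_aInner_eq
  rw [hB, aNorm_eq_norm hB, aNorm_eq_norm hB]
  exact norm_inner_le_norm _ _

theorem norm_aInner_mul_aInner_le (hA : A.IsPositive) (a b : E) {e : E} (he : aNorm A e = 1) :
    ‖aInner A a e * aInner A e b‖ ≤ (‖aInner A a b‖ + aNorm A a * aNorm A b) / 2 := by
  obtain ⟨B, hB⟩ := hA.exists_aInner_eq
  simp only [hB, aNorm_eq_norm hB] at he ⊢
  exact norm_inner_mul_inner_le_of_norm_eq_one _ _ he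

theorem aInner_apply_left_of_semiconjBy {T S : E →L[ℂ] E} (hA : IsSelfAdjoint A)
    (h : SemiconjBy A S (star T)) (x y : E) : aInner A (T x) y = aInner A x (S y) := by
  have hAS : A (S y) = adjoint T (A y) := congr($h y)
  calc aInner A (T x) y = ⟪T x, A y⟫_ℂ := hA.isSymmetric _ _
    _ = ⟪x, A (S y)⟫_ℂ := by rw [hAS, adjoint_inner_right]
    _ = aInner A x (S y) := (hA.isSymmetric _ _).symm

theorem aNorm_apply_le_of_semiconjBy (hA : A.IsPositive) {K : E →L[ℂ] E}
    (hK : SemiconjBy A K (star K)) (x : E) : aNorm A (K x) ≤ ‖K‖ * aNorm A x := by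
  have hsq : ∀ L : E →L[ℂ] E, SemiconjBy A L (star L) →
      aNorm A (L x) ^ 2 ≤ aNorm A x * aNorm A (L (L x)) := fun L hL ↦ calc
    aNorm A (L x) ^ 2 = (aInner A x (L (L x))).re := by
        rw [aNorm_sq_eq_re_aInner hA, aInner_apply_left_of_semiconjBy hA.isSelfAdjoint hL]
    _ ≤ ‖aInner A x (L (L x))‖ := Complex.re_le_norm _
    _ ≤ aNorm A x * aNorm A (L (L x)) := norm_aInner_le_aNorm_mul_aNorm hA _ _
  rcases (aNorm_nonneg A x).eq_or_lt with hc | hc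
  · have h := hsq K hK
    rw [← hc, zero_mul] at h
    rw [← hc, mul_zero, (sq_nonpos_iff _).1 h]
  set u : ℕ → ℝ := fun n ↦ aNorm A ((K ^ 2 ^ n) x) / aNorm A x
  have hu : ∀ n, u n ^ 2 ≤ u (n + 1) := by
    intro n
    have h := hsq (K ^ 2 ^ n) (by simpa [star_pow] using hK.pow_right (2 ^ n))
    rw [← mul_apply_eq_comp, ← sq, ← pow_mul, ← pow_succ] at h
    simp only [u, div_pow]
    rw [div_le_div_iff₀ (by positivity) hc]
    nlinarith
  obtain ⟨B, hB⟩ := hA.exists_aInner_eq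
  have hgrowth : ∀ n, u n ≤ ‖B‖ * ‖x‖ / aNorm A x * ‖K‖ ^ 2 ^ n := by
    intro n
    rw [div_mul_eq_mul_div, div_le_div_iff_of_pos_right hc, aNorm_eq_norm hB]
    calc ‖B ((K ^ 2 ^ n) x)‖ ≤ ‖B‖ * (‖K ^ 2 ^ n‖ * ‖x‖) := le_opNorm_of_le _ (le_opNorm _ _)
      _ ≤ ‖B‖ * (‖K‖ ^ 2 ^ n * ‖x‖) := by gcongr; exact norm_pow_le' K (by positivity)
      _ = ‖B‖ * ‖x‖ * ‖K‖ ^ 2 ^ n := by ring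
  have := le_of_forall_pow_le_mul_pow (norm_nonneg K)
    (tendsto_pow_atTop_atTop_of_one_lt one_lt_two)
    fun n ↦ (pow_two_pow_le_of_sq_le (div_nonneg (aNorm_nonneg _ _) hc.le) hu n).trans (hgrowth n)
  simpa [u, div_le_iff₀ hc] using this

theorem norm_aInner_le_wA (hA : A.IsPositive) {K : E →L[ℂ] E} {c : ℝ}
    (hK : ∀ x, aNorm A (K x) ≤ c * aNorm A x) {x : E} (hx : aNorm A x = 1) :
    ‖aInner A (K x) x‖ ≤ wA A K := by
  refine le_csSup ⟨c, ?_⟩ ⟨x, hx, rfl⟩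
  rintro _ ⟨y, hy, rfl⟩
  calc ‖aInner A (K y) y‖ ≤ aNorm A (K y) * aNorm A y := norm_aInner_le_aNorm_mul_aNorm hA _ _
    _ ≤ c := by simpa [hy] using hK y

theorem aNorm_apply_le_opNormA (hA : A.IsPositive) {K : E →L[ℂ] E} {c : ℝ}
    (hK : ∀ x, aNorm A (K x) ≤ c * aNorm A x) {x : E} (hx : aNorm A x = 1) :
    aNorm A (K x) ≤ opNormA A K := by
  obtain ⟨B, hB⟩ := hA.exists_aInner_eq
  set V := (LinearMap.range (A : E →ₗ[ℂ] E)).topologicalClosure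
  set x' := V.starProjection x
  have hker : A (x - x') = 0 := by
    have h := V.sub_starProjection_mem_orthogonal x
    rwa [Submodule.orthogonal_closure, orthogonal_range, hA.isSelfAdjoint.adjoint_eq] at h
  have hBx : B (x - x') = 0 := by
    rw [← norm_eq_zero, ← aNorm_eq_norm hB, aNorm, aInner, hker]
    simp
  have hBKx : B (K (x - x')) = 0 := by
    rw [← norm_eq_zero, ← aNorm_eq_norm hB]
    exact le_antisymm (by simpa [aNorm_eq_norm hB, hBx] using hK (x - x')) (aNorm_nonneg _ _)
  simp only [map_sub, sub_eq_zero] at hBx hBKx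
  refine le_csSup ⟨c, ?_⟩ ⟨x', ?_, ?_, ?_⟩
  · rintro _ ⟨y, -, hy, rfl⟩
    simpa [hy] using hK y
  · have hV : (V : Set E) = closure (Set.range A) := by
      simp [V, Submodule.topologicalClosure_coe, LinearMap.coe_range]
    exact hV ▸ V.starProjection_apply_mem x
  · rw [aNorm_eq_norm hB, ← hBx, ← aNorm_eq_norm hB, hx]
  · rw [aNorm_eq_norm hB, aNorm_eq_norm hB, hBKx]

theorem re_aInner_apply_le_opNormA (hA : A.IsPositive) {K : E →L[ℂ] E}
    (hK : SemiconjBy A K (star K)) {x : E} (hx : aNorm A x = 1) :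
    (aInner A (K x) x).re ≤ opNormA A K := calc
  (aInner A (K x) x).re ≤ ‖aInner A (K x) x‖ := Complex.re_le_norm _
  _ ≤ aNorm A (K x) := by simpa [hx] using norm_aInner_le_aNorm_mul_aNorm hA (K x) x
  _ ≤ opNormA A K := aNorm_apply_le_opNormA hA (aNorm_apply_le_of_semiconjBy hA hK) hx

section AAdjoint

variable {T S : E →L[ℂ] E}

theorem aNorm_apply_sq_eq_re_aInner (hA : A.IsPositive) (hTS : SemiconjBy A S (star T))
    (x : E) : aNorm A (T x) ^ 2 = (aInner A (S (T x)) x).re := by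
  rw [aNorm_sq_eq_re_aInner hA, aInner_apply_left_of_semiconjBy hA.isSelfAdjoint
    (hTS.star_of_isSelfAdjoint hA.isSelfAdjoint)]

theorem aNorm_apply_le_sqrt_mul (hA : A.IsPositive) (hTS : SemiconjBy A S (star T)) (x : E) :
    aNorm A (T x) ≤ √‖S * T‖ * aNorm A x := by
  have hsq : aNorm A (T x) ^ 2 ≤ ‖S * T‖ * aNorm A x ^ 2 := calc
    aNorm A (T x) ^ 2 ≤ ‖aInner A ((S * T) x) x‖ := by
        rw [mul_apply_eq_comp, aNorm_apply_sq_eq_re_aInner hA hTS]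
        exact Complex.re_le_norm _
    _ ≤ aNorm A ((S * T) x) * aNorm A x := norm_aInner_le_aNorm_mul_aNorm hA _ _
    _ ≤ ‖S * T‖ * aNorm A x * aNorm A x := by
        gcongr
        · exact aNorm_nonneg _ _
        · exact aNorm_apply_le_of_semiconjBy hA
            (hTS.mul_star_of_isSelfAdjoint hA.isSelfAdjoint) x
    _ = ‖S * T‖ * aNorm A x ^ 2 := by ring
  refine (le_abs_self _).trans ?_
  simpa [Real.sqrt_mul (norm_nonneg _), Real.sqrt_sq (aNorm_nonneg A x)] using
    Real.abs_le_sqrt hsq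

theorem aNorm_comp_self_apply_le (hA : A.IsPositive) (hTS : SemiconjBy A S (star T)) (x : E) :
    aNorm A ((T ∘L T) x) ≤ ‖S * T‖ * aNorm A x := calc
  aNorm A (T (T x)) ≤ √‖S * T‖ * (√‖S * T‖ * aNorm A x) :=
    (aNorm_apply_le_sqrt_mul hA hTS _).trans
      (by gcongr; exact aNorm_apply_le_sqrt_mul hA hTS x)
  _ = ‖S * T‖ * aNorm A x := by rw [← mul_assoc, Real.mul_self_sqrt (norm_nonneg _)]

theorem norm_aInner_apply_sq_le (hA : A.IsPositive) (hTS : SemiconjBy A S (star T)) {x : E}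
    (hx : aNorm A x = 1) :
    ‖aInner A (T x) x‖ ^ 2 ≤
      wA A (T ∘L T) / 2 + (aNorm A (T x) ^ 2 + aNorm A (S x) ^ 2) / 4 := by
  have h := norm_aInner_mul_aInner_le hA (T x) (S x) hx
  rw [← aInner_apply_left_of_semiconjBy hA.isSelfAdjoint hTS,
    ← aInner_apply_left_of_semiconjBy hA.isSelfAdjoint hTS, ← sq, norm_pow] at h
  have hw : ‖aInner A ((T ∘L T) x) x‖ ≤ wA A (T ∘L T) :=
    norm_aInner_le_wA hA (aNorm_comp_self_apply_le hA hTS) hx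
  rw [comp_apply] at hw
  nlinarith [sq_nonneg (aNorm A (T x) - aNorm A (S x))]

theorem semiconjBy_comp_add_comp (hA : A.IsPositive) (hTS : SemiconjBy A S (star T)) :
    SemiconjBy A (S ∘L T + T ∘L S) (star (S ∘L T + T ∘L S)) := by
  rw [star_add]
  exact (hTS.mul_star_of_isSelfAdjoint hA.isSelfAdjoint).add_right
    ((hTS.star_of_isSelfAdjoint hA.isSelfAdjoint).mul_star_of_isSelfAdjoint hA.isSelfAdjoint)

end AAdjoint

end SemiInnerProduct

theorem stmt18 (A T S : H →L[ℂ] H) (hA : A.IsPositive) (hT : IsAAdjoint A T S)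
    (α : ℝ) (hα : α ∈ Set.Icc (0:ℝ) 1) :
    alphaNorm A T α ^ 2 ≤
      (α/2) * wA A (T ∘L T) +
        opNormA A ((α/4) • (S ∘L T + T ∘L S) + (1 - α) • (S ∘L T)) ∧
    wA A T ^ 2 ≤ (1/2) * wA A (T ∘L T) + (1/4) * opNormA A (S ∘L T + T ∘L S) := by
  obtain ⟨hα0, hα1⟩ := hα
  have hTS : SemiconjBy A S (star T) := hT.1
  have hM := semiconjBy_comp_add_comp hA hTS
  have hR : SemiconjBy A ((α/4) • (S ∘L T + T ∘L S) + (1 - α) • (S ∘L T))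
      (star ((α/4) • (S ∘L T + T ∘L S) + (1 - α) • (S ∘L T))) := by
    rw [star_add, star_smul, star_smul, star_trivial (α / 4), star_trivial (1 - α)]
    exact (hM.smul_right _).add_right
      ((hTS.mul_star_of_isSelfAdjoint hA.isSelfAdjoint).smul_right _)
  have hTx := aNorm_apply_sq_eq_re_aInner hA hTS
  have hSx := aNorm_apply_sq_eq_re_aInner hA (hTS.star_of_isSelfAdjoint hA.isSelfAdjoint)
  have hw := wA_nonneg A (T ∘L T)
  constructor
  · refine sq_sSup_le ?_ (add_nonneg (by positivity) (opNormA_nonneg _ _))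
    rintro _ ⟨x, hx, rfl⟩
    have hRx := re_aInner_apply_le_opNormA hA hR hx
    simp only [add_apply, smul_apply, comp_apply, aInner_add_left, re_aInner_smul_left,
      Complex.add_re, ← hTx, ← hSx] at hRx
    refine ⟨Real.sqrt_nonneg _, ?_⟩
    rw [Real.sq_sqrt (by positivity)]
    nlinarith [mul_le_mul_of_nonneg_left (norm_aInner_apply_sq_le hA hTS hx) hα0]
  · refine sq_sSup_le ?_
      (add_nonneg (by positivity) (mul_nonneg (by norm_num) (opNormA_nonneg _ _)))
    rintro _ ⟨x, hx, rfl⟩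
    have hMx := re_aInner_apply_le_opNormA hA hM hx
    simp only [add_apply, comp_apply, aInner_add_left, Complex.add_re, ← hTx, ← hSx] at hMx
    exact ⟨norm_nonneg _, by linarith [norm_aInner_apply_sq_le hA hTS hx]⟩
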